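/- arXiv:2012.06270 — 6 statements merged into one kernel-verified Lean document; each statement's English description precedes it below -/
import Mathlib

section
/- For every even natural number d there exists a polynomial Q with integer coefficients in two variables, depending only on d, such that for all natural numbers n and all real p, the d-th central binomial moment satisfies ∑_{j=0}^{n} C(n,j) p^j (1−p)^{n−j} (j−np)^d = Q(n, p(1−p)). -/
/-!
The central moments `μ_d(n, p)` are polynomials in `p`; since `p(1-p) · d/dp` acts on the
Bernstein basis as multiplication by `j - np`, they satisfy
`μ_{d+2} = p(1-p) μ'_{d+1} + (d+1) n p(1-p) μ_d` with `μ_0 = 1`, `μ_1 = 0`.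
Writing `σ = p(1-p)`, we have `d/dp = (1-2p) d/dσ` on polynomials in `σ` and `(1-2p)² = 1 - 4σ`,
so by induction `μ_d` is `Q_d(n, σ)` for even `d` and `(1-2p) Q_d(n, σ)` for odd `d`, with integer
polynomials `Q_d` obeying a recurrence that does not involve `n` or `p`.
-/

open Polynomial Finset

section
variable {R : Type*} [CommRing R]

theorem bernsteinPolynomial.X_mul_one_sub_X_mul_derivative (n ν : ℕ) :
    (X : R[X]) * (1 - X) * derivative (bernsteinPolynomial R n ν) =
      ((ν : R[X]) - (n : R[X]) * X) * bernsteinPolynomial R n ν := by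
  rcases lt_or_ge n ν with h | h
  · simp [bernsteinPolynomial.eq_zero_of_lt R h]
  have hX : (X : R[X]) * derivative (X ^ ν) = (ν : R[X]) * X ^ ν := by
    cases ν with
    | zero => simp
    | succ k => rw [derivative_X_pow, Nat.add_sub_cancel, ← C_eq_natCast]; ring
  have hY : (1 - X : R[X]) * derivative ((1 - X) ^ (n - ν)) =
      -(((n : R[X]) - (ν : R[X])) * (1 - X) ^ (n - ν)) := by
    rw [← Nat.cast_sub h]
    cases n - ν with
    | zero => simp
    | succ k =>
      rw [derivative_pow, Nat.add_sub_cancel, ← C_eq_natCast, derivative_sub, derivative_one,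
        derivative_X]
      ring
  simp only [bernsteinPolynomial, derivative_mul, derivative_natCast, zero_mul, zero_add]
  linear_combination ((n.choose ν : R[X]) * (1 - X) * (1 - X) ^ (n - ν)) * hX +
    ((n.choose ν : R[X]) * X * X ^ ν) * hY

variable (R) in
noncomputable def binomialCentralMoment (n d : ℕ) : R[X] :=
  ∑ ν ∈ range (n + 1), bernsteinPolynomial R n ν * ((ν : R[X]) - (n : R[X]) * X) ^ d

theorem eval_binomialCentralMoment (n d : ℕ) (p : R) :
    (binomialCentralMoment R n d).eval p = ∑ j ∈ range (n + 1),
      (n.choose j : R) * p ^ j * (1 - p) ^ (n - j) * ((j : R) - n * p) ^ d := by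
  simp [binomialCentralMoment, bernsteinPolynomial, eval_finsetSum]

theorem binomialCentralMoment_zero (n : ℕ) : binomialCentralMoment R n 0 = 1 := by
  simp [binomialCentralMoment, bernsteinPolynomial.sum]

theorem binomialCentralMoment_one (n : ℕ) : binomialCentralMoment R n 1 = 0 := by
  have hmean := bernsteinPolynomial.sum_smul (R := R) n
  simp only [nsmul_eq_mul] at hmean
  calc binomialCentralMoment R n 1
      = ∑ ν ∈ range (n + 1), (ν : R[X]) * bernsteinPolynomial R n ν
        - (n : R[X]) * X * ∑ ν ∈ range (n + 1), bernsteinPolynomial R n ν := by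
        simp only [binomialCentralMoment, pow_one, mul_sum, ← sum_sub_distrib]
        exact sum_congr rfl fun ν _ => by ring
    _ = 0 := by rw [hmean, bernsteinPolynomial.sum, mul_one, sub_self]

theorem binomialCentralMoment_add_two (n d : ℕ) :
    binomialCentralMoment R n (d + 2) =
      (X : R[X]) * (1 - X) * derivative (binomialCentralMoment R n (d + 1)) +
        ((d : R[X]) + 1) * (n : R[X]) * (X * (1 - X)) * binomialCentralMoment R n d := by
  simp only [binomialCentralMoment, derivative_sum, mul_sum, ← sum_add_distrib]
  refine sum_congr rfl fun ν _ => ?_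
  have hB := bernsteinPolynomial.X_mul_one_sub_X_mul_derivative (R := R) n ν
  have hpow : derivative (((ν : R[X]) - (n : R[X]) * X) ^ (d + 1)) =
      -(((d : R[X]) + 1) * (n : R[X])) * ((ν : R[X]) - (n : R[X]) * X) ^ d := by
    rw [derivative_pow, Nat.add_sub_cancel, C_eq_natCast, derivative_sub, derivative_natCast,
      derivative_mul, derivative_natCast, derivative_X]
    push_cast
    ring
  rw [derivative_mul, hpow]
  linear_combination -((ν : R[X]) - (n : R[X]) * X) ^ (d + 1) * hB

variable (R) in
noncomputable def substCountVariance (n : ℕ) : MvPolynomial (Fin 2) ℤ →ₐ[ℤ] R[X] :=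
  MvPolynomial.aeval ![(n : R[X]), X * (1 - X)]

@[simp]
theorem substCountVariance_X_zero (n : ℕ) :
    substCountVariance R n (MvPolynomial.X 0) = n := by
  simp [substCountVariance]

@[simp]
theorem substCountVariance_X_one (n : ℕ) :
    substCountVariance R n (MvPolynomial.X 1) = X * (1 - X) := by
  simp [substCountVariance]

theorem derivative_substCountVariance (n : ℕ) (Q : MvPolynomial (Fin 2) ℤ) :
    derivative (substCountVariance R n Q) =
      (1 - 2 * X) * substCountVariance R n (MvPolynomial.pderiv 1 Q) := by
  have hX : ∀ i, derivative (substCountVariance R n (MvPolynomial.X i)) =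
      (1 - 2 * X) * substCountVariance R n (MvPolynomial.pderiv 1 (MvPolynomial.X i)) := by
    refine Fin.forall_fin_two.mpr ⟨by simp, ?_⟩
    rw [substCountVariance_X_one, MvPolynomial.pderiv_X_self, map_one, derivative_mul,
      derivative_sub, derivative_one, derivative_X]
    ring
  induction Q using MvPolynomial.induction_on with
  | C a => simp
  | add P Q hP hQ => simp only [map_add, hP, hQ]; ring
  | mul_X P i hP =>
    rw [map_mul, derivative_mul, hP, hX, Derivation.leibniz, smul_eq_mul, smul_eq_mul, map_add,
      map_mul, map_mul]
    ring

theorem eval_substCountVariance (n : ℕ) (p : R) (Q : MvPolynomial (Fin 2) ℤ) :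
    (substCountVariance R n Q).eval p = MvPolynomial.aeval ![(n : R), p * (1 - p)] Q := by
  rw [substCountVariance, ← coe_aeval_eq_eval, ← (aeval p).restrictScalars_apply ℤ,
    MvPolynomial.comp_aeval_apply]
  congr 1
  ext i
  fin_cases i <;> simp

end

noncomputable def centralMomentPoly : ℕ → MvPolynomial (Fin 2) ℤ
  | 0 => 1
  | 1 => 0
  | d + 2 =>
    if Even d then
      .X 1 * ((1 - 4 * .X 1) * .pderiv 1 (centralMomentPoly (d + 1)) -
          2 * centralMomentPoly (d + 1)) +
        (d + 1) * .X 0 * .X 1 * centralMomentPoly d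
    else
      .X 1 * .pderiv 1 (centralMomentPoly (d + 1)) + (d + 1) * .X 0 * .X 1 * centralMomentPoly d

theorem binomialCentralMoment_eq {R : Type*} [CommRing R] (n d : ℕ) :
    binomialCentralMoment R n d =
      (if Even d then 1 else 1 - 2 * X) * substCountVariance R n (centralMomentPoly d) := by
  have hε : derivative (1 - 2 * X : R[X]) = -2 := by simp
  induction d using Nat.twoStepInduction with
  | zero => simp [binomialCentralMoment_zero, centralMomentPoly]
  | one => simp [binomialCentralMoment_one, centralMomentPoly]
  | more d ih ih1 =>
    rw [binomialCentralMoment_add_two, ih, ih1, centralMomentPoly]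
    rcases Nat.even_or_odd d with hd | hd
    · have hd1 : ¬Even (d + 1) := by simpa [Nat.even_add_one] using hd
      rw [if_pos hd, if_neg hd1, if_pos (hd.add even_two), if_pos hd, derivative_mul, hε,
        derivative_substCountVariance]
      simp only [map_add, map_sub, map_mul, map_one, map_natCast, map_ofNat,
        substCountVariance_X_zero, substCountVariance_X_one]
      ring
    · have hd' : ¬Even d := Nat.not_even_iff_odd.mpr hd
      rw [if_neg hd', if_pos hd.add_one, if_neg (Nat.not_even_iff_odd.mpr (hd.add_even even_two)),
        if_neg hd', one_mul, derivative_substCountVariance]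
      simp only [map_add, map_mul, map_natCast, map_one, substCountVariance_X_zero,
        substCountVariance_X_one]
      ring

/-- for even d, the d-th central binomial moment is a polynomial
with integer coefficients in n and σ² = p(1-p). -/
theorem central_moment_even_poly (d : ℕ) (hd : Even d) :
    ∃ Q : MvPolynomial (Fin 2) ℤ, ∀ (n : ℕ) (p : ℝ),
      ∑ j ∈ Finset.range (n + 1),
          (n.choose j : ℝ) * p ^ j * (1 - p) ^ (n - j) * ((j : ℝ) - n * p) ^ d =
      MvPolynomial.aeval ![(n : ℝ), p * (1 - p)] Q := by
  refine ⟨centralMomentPoly d, fun n p => ?_⟩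
  rw [← eval_binomialCentralMoment, binomialCentralMoment_eq, if_pos hd, one_mul,
    eval_substCountVariance]
end

section
/- For every natural number n, every real p with q = 1−p, and every natural number d ≥ 1, the d-th central binomial moment admits the expansion ∑_{j=0}^{n} C(n,j) p^j q^{n−j} (j−np)^d = ∑_{k=1}^{⌊d/2⌋} C(n,k) (pq)^k · ∑_{(d_1,…,d_k), each d_i ≥ 2, d_1+⋯+d_k = d} C(d; d_1,…,d_k) · ∏_{i=1}^{k} (q^{d_i−1} − (−p)^{d_i−1}). -/
/-!
The central moments of `Binom(n, p)` are `d!` times the coefficients of the power series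
`M ^ n`, where `M = p e^{qX} + q e^{-pX}` is the moment generating function of a centred
Bernoulli variable. As `p + q = 1`, `M = 1 + pq G` with `G = ∑ (q^{m-1} - (-p)^{m-1}) X^m / m!`,
whose terms of degree `0` and `1` vanish. The binomial theorem gives
`M ^ n = ∑ C(n, k) (pq)^k G^k`, the multinomial theorem identifies `d!` times the `d`-th
coefficient of `G ^ k` with the sum over `k`-tuples of parts `≥ 2`, and `X^{2k} ∣ G^k` cuts the
sum off at `k = ⌊d/2⌋`.
-/

open PowerSeries Finset Nat

section Egf

variable {K : Type*} [Field K]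

noncomputable def egf (a : ℕ → K) : K⟦X⟧ := mk fun m => a m / m !

theorem X_sq_dvd_egf {a : ℕ → K} (h0 : a 0 = 0) (h1 : a 1 = 0) : X ^ 2 ∣ egf a := by
  refine X_pow_dvd_iff.2 fun m hm => ?_
  interval_cases m <;> simp [egf, h0, h1]

variable [CharZero K]

theorem coeff_egf_pow (a : ℕ → K) (k d : ℕ) :
    coeff d (egf a ^ k) =
      (∑ f ∈ Nat.antidiagonalTuple k d, (multinomial univ f : K) * ∏ i, a (f i)) / d ! := by
  have hprod : egf a ^ k = ∏ _i : Fin k, egf a := by simp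
  rw [hprod, coeff_prod, ← piAntidiag_univ_fin_eq_antidiagonalTuple, sum_div]
  simp only [finsuppAntidiag, sum_map]
  conv_rhs => rw [← sum_attach]
  refine sum_congr rfl fun ⟨f, hf⟩ _ => ?_
  have hspec : (∏ i, ((f i)! : K)) * multinomial univ f = d ! := by
    rw [← (mem_piAntidiag.1 hf).1]
    exact_mod_cast multinomial_spec univ f
  have hfact : ∏ i, ((f i)! : K) ≠ 0 :=
    prod_ne_zero_iff.2 fun i _ => by exact_mod_cast (f i).factorial_ne_zero
  have hmult : (multinomial univ f : K) ≠ 0 := by exact_mod_cast (multinomial_pos univ f).ne'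
  show ∏ i, coeff (f i) (egf a) = _
  simp only [egf, coeff_mk, prod_div_distrib, ← hspec]
  field_simp

theorem rescale_exp_eq_egf (a : K) : rescale a (exp K) = egf (a ^ ·) := by
  ext m
  simp [egf, coeff_rescale, coeff_exp, div_eq_mul_inv]

theorem rescale_exp_pow (a : K) (j : ℕ) : rescale a (exp K) ^ j = rescale (j * a) (exp K) := by
  rw [← map_pow, exp_pow_eq_rescale_exp, rescale_rescale]

end Egf

theorem coeff_one_add_C_mul_pow {R : Type*} [CommSemiring R] {G : R⟦X⟧} (hG : X ^ 2 ∣ G) (b : R)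
    (n : ℕ) {d : ℕ} (hd : d ≠ 0) :
    coeff d ((1 + C b * G) ^ n) = ∑ k ∈ Icc 1 (d / 2), n.choose k * b ^ k * coeff d (G ^ k) := by
  have hvanish : ∀ k ∉ Icc 1 (d / 2), coeff d (G ^ k) = 0 := by
    intro k hk
    rcases Nat.eq_zero_or_pos k with rfl | hk0
    · simp [coeff_one, hd]
    · have hdk : d < 2 * k := by simp only [mem_Icc, not_and_or] at hk; omega
      have : X ^ (2 * k) ∣ G ^ k := pow_mul (X : R⟦X⟧) 2 k ▸ pow_dvd_pow_of_dvd hG k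
      exact X_pow_dvd_iff.1 this d hdk
  rw [add_comm, add_pow, map_sum]
  calc ∑ k ∈ range (n + 1), coeff d ((C b * G) ^ k * 1 ^ (n - k) * (n.choose k : R⟦X⟧))
      = ∑ k ∈ range (n + 1), n.choose k * b ^ k * coeff d (G ^ k) := by
        refine sum_congr rfl fun k _ => ?_
        rw [one_pow, mul_one, mul_pow, ← map_pow, mul_comm, ← map_natCast C, ← mul_assoc,
          ← map_mul, coeff_C_mul, mul_assoc]
    _ = ∑ k ∈ range (n + 1) ∩ Icc 1 (d / 2), n.choose k * b ^ k * coeff d (G ^ k) :=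
        (sum_subset inter_subset_left fun k hk hk' => by
          rw [hvanish k fun h => hk' (mem_inter.2 ⟨hk, h⟩), mul_zero]).symm
    _ = ∑ k ∈ Icc 1 (d / 2), n.choose k * b ^ k * coeff d (G ^ k) :=
        sum_subset inter_subset_right fun k hk hk' => by
          rw [Nat.choose_eq_zero_of_lt (by simpa [hk] using hk'), Nat.cast_zero, zero_mul, zero_mul]

theorem sum_antidiagonalTuple_filter_two_le {R : Type*} [CommSemiring R] {a : ℕ → R}
    (h0 : a 0 = 0) (h1 : a 1 = 0) (k d : ℕ) :
    ∑ f ∈ (Nat.antidiagonalTuple k d).filter (fun f => ∀ i, 2 ≤ f i),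
        (multinomial univ f : R) * ∏ i, a (f i) =
      ∑ f ∈ Nat.antidiagonalTuple k d, (multinomial univ f : R) * ∏ i, a (f i) := by
  refine sum_filter_of_ne fun f _ hf i => ?_
  by_contra! hi
  have : a (f i) = 0 := by interval_cases f i <;> assumption
  exact hf (by rw [prod_eq_zero (mem_univ i) this, mul_zero])

section CenteredBernoulli

variable {K : Type*} [Field K] [CharZero K]

noncomputable def centeredBernoulliMGF (p q : K) : K⟦X⟧ :=
  C p * rescale q (exp K) + C q * rescale (-p) (exp K)

theorem centeredBernoulliMGF_pow {p q : K} (hq : q = 1 - p) (n : ℕ) :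
    centeredBernoulliMGF p q ^ n = ∑ j ∈ range (n + 1),
      C (n.choose j * p ^ j * q ^ (n - j)) * rescale (j - n * p) (exp K) := by
  rw [centeredBernoulliMGF, add_pow]
  refine sum_congr rfl fun j hj => ?_
  have hjn : j ≤ n := Nat.lt_succ_iff.1 (mem_range.1 hj)
  have hexponent : (j : K) - n * p = j * q + ((n - j : ℕ) : K) * -p := by
    rw [Nat.cast_sub hjn, hq]
    ring
  rw [mul_pow, mul_pow, rescale_exp_pow, rescale_exp_pow, ← map_pow, ← map_pow, map_mul, map_mul,
    map_natCast, hexponent, ← exp_mul_exp_eq_exp_add]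
  ring

theorem factorial_mul_coeff_centeredBernoulliMGF_pow {p q : K} (hq : q = 1 - p) (n d : ℕ) :
    d ! * coeff d (centeredBernoulliMGF p q ^ n) =
      ∑ j ∈ range (n + 1), n.choose j * p ^ j * q ^ (n - j) * ((j : K) - n * p) ^ d := by
  have hd : (d ! : K) ≠ 0 := by exact_mod_cast d.factorial_ne_zero
  rw [centeredBernoulliMGF_pow hq, map_sum, mul_sum]
  refine sum_congr rfl fun j _ => ?_
  rw [coeff_C_mul, rescale_exp_eq_egf, egf, coeff_mk]
  field_simp

theorem centeredBernoulliMGF_eq_one_add {p q : K} (hq : q = 1 - p) :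
    centeredBernoulliMGF p q = 1 + C (p * q) * egf (fun m => q ^ (m - 1) - (-p) ^ (m - 1)) := by
  ext m
  rw [centeredBernoulliMGF, rescale_exp_eq_egf, rescale_exp_eq_egf]
  simp only [map_add, coeff_C_mul, egf, coeff_mk, coeff_one]
  rcases m with _ | m
  · simp [hq]
  · simp only [Nat.add_eq_zero_iff, one_ne_zero, and_false, if_false, Nat.add_sub_cancel,
      zero_add, pow_succ]
    ring

end CenteredBernoulli

/-- stable expansion of the d-th central binomial moment as a sum
over k = 1..⌊d/2⌋ and ordered tuples of parts ≥ 2 summing to d. -/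
theorem central_moment_stable_expansion (n : ℕ) (p q : ℝ) (hq : q = 1 - p)
    (d : ℕ) (hd : 1 ≤ d) :
    ∑ j ∈ Finset.range (n + 1),
        (n.choose j : ℝ) * p ^ j * q ^ (n - j) * ((j : ℝ) - n * p) ^ d =
    ∑ k ∈ Finset.Icc 1 (d / 2),
      (n.choose k : ℝ) * (p * q) ^ k *
        ∑ f ∈ (Finset.Nat.antidiagonalTuple k d).filter (fun f => ∀ i, 2 ≤ f i),
          (Nat.multinomial Finset.univ f : ℝ) *
            ∏ i, (q ^ (f i - 1) - (-p) ^ (f i - 1)) := by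
  set c : ℕ → ℝ := fun m => q ^ (m - 1) - (-p) ^ (m - 1)
  -- `0 - 1 = 1 - 1` in `ℕ`, so `c` vanishes at `0` as well as at `1`.
  have hc0 : c 0 = 0 := sub_self _
  have hc1 : c 1 = 0 := sub_self _
  have hfact : (d ! : ℝ) ≠ 0 := by exact_mod_cast d.factorial_ne_zero
  rw [← factorial_mul_coeff_centeredBernoulliMGF_pow hq, centeredBernoulliMGF_eq_one_add hq,
    coeff_one_add_C_mul_pow (X_sq_dvd_egf hc0 hc1) _ _ (by omega), mul_sum]
  refine sum_congr rfl fun k _ => ?_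
  rw [coeff_egf_pow, sum_antidiagonalTuple_filter_two_le hc0 hc1]
  field_simp
end

section
/- For every natural number n, every real p with 0 ≤ p ≤ 1/2 and q = 1−p, and every natural number d ≥ 2, the d-th central binomial moment is bounded above by ∑_{j=0}^{n} C(n,j) p^j q^{n−j} (j−np)^d ≤ ∑_{k=1}^{⌊d/2⌋} C(n,k) (pq)^k · k^d. -/
/-!
Encode an outcome of `n` Bernoulli(`p`) trials by its set `A` of successes, so that
`#A - n p = ∑ i, (𝟙[i ∈ A] - p)`. Expanding the `d`-th power gives a sum over maps
`f : Fin d → Fin n`, and by independence the term of `f` has expectation `∏ i, μ (c i)`, where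
`c i` is the number of times `f` takes the value `i` and `μ m` is the `m`-th central moment of a
Bernoulli(`p`) variable. As `μ 0 = 1`, `μ 1 = 0` and `0 ≤ μ m ≤ p q` for `m ≥ 2` when `p ≤ q`,
only maps hitting each of their values at least twice contribute; such a map has an image of
some size `k ≤ d / 2`, contributes at most `(p q) ^ k`, and there are at most `C(n, k) k ^ d` of them.
-/

open Finset

section Fiber

variable {α ι : Type*} [Fintype α] [DecidableEq ι]

def fiberCard (f : α → ι) (i : ι) : ℕ := #{t | f t = i}

lemma fiberCard_eq_zero_iff {f : α → ι} {i : ι} : fiberCard f i = 0 ↔ i ∉ univ.image f := by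
  simp [fiberCard, filter_eq_empty_iff]

lemma sum_image_fiberCard (f : α → ι) : ∑ i ∈ univ.image f, fiberCard f i = Fintype.card α :=
  (card_eq_sum_card_fiberwise fun t _ ↦ mem_image_of_mem f (mem_univ t)).symm

lemma prod_comp_eq_prod_pow_fiberCard [Fintype ι] {M : Type*} [CommMonoid M]
    (g : ι → M) (f : α → ι) : ∏ t, g (f t) = ∏ i, g i ^ fiberCard f i := by
  simp_rw [← prod_fiberwise' univ f g, prod_const, fiberCard]

lemma two_mul_card_image_le {f : α → ι} (hf : ∀ i, fiberCard f i ≠ 1) :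
    2 * #(univ.image f) ≤ Fintype.card α := by
  rw [← sum_image_fiberCard f, mul_comm, ← smul_eq_mul, ← sum_const]
  refine sum_le_sum fun i hi ↦ ?_
  have := fiberCard_eq_zero_iff.not_left.mpr hi
  have := hf i
  omega

variable [DecidableEq α] [Fintype ι]

lemma card_filter_image_eq_le (T : Finset ι) :
    #{f : α → ι | univ.image f = T} ≤ #T ^ Fintype.card α := by
  calc #{f : α → ι | univ.image f = T}
      ≤ #(Fintype.piFinset fun _ : α ↦ T) := card_le_card fun f hf ↦ by
        rw [Fintype.mem_piFinset, ← (mem_filter.mp hf).2]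
        exact fun t ↦ mem_image_of_mem f (mem_univ t)
    _ = #T ^ Fintype.card α := by simp [Fintype.card_piFinset]

lemma sum_apply_card_image_le {R : Type*} [CommSemiring R] [PartialOrder R] [IsOrderedRing R]
    (g : ℕ → R) (hg : ∀ k, 0 ≤ g k) :
    ∑ f : α → ι, g #(univ.image f) ≤
      ∑ k ∈ range (Fintype.card ι + 1),
        ((Fintype.card ι).choose k * k ^ Fintype.card α : R) * g k := by
  calc ∑ f : α → ι, g #(univ.image f)
      = ∑ T : Finset ι, ∑ f ∈ {f : α → ι | univ.image f = T}, g #(univ.image f) :=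
        (sum_fiberwise univ _ _).symm
    _ = ∑ T : Finset ι, (#{f : α → ι | univ.image f = T} : R) * g #T :=
        sum_congr rfl fun T _ ↦ by
          rw [sum_congr rfl fun f hf ↦ by rw [(mem_filter.mp hf).2], sum_const, nsmul_eq_mul]
    _ ≤ ∑ T : Finset ι, (#T ^ Fintype.card α : R) * g #T :=
        sum_le_sum fun T _ ↦ mul_le_mul_of_nonneg_right (by
            simpa only [Nat.cast_pow] using
              Nat.mono_cast (α := R) (card_filter_image_eq_le (α := α) T)) (hg _)
    _ = _ := by
        rw [← powerset_univ, sum_powerset_apply_card (fun k ↦ (k ^ Fintype.card α : R) * g k),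
          card_univ]
        simp only [nsmul_eq_mul, mul_assoc]

end Fiber

section CommRing

variable {R : Type*} [CommRing R] {α ι : Type*} [Fintype α] [Fintype ι] [DecidableEq ι]

def bernoulliCentralMoment (p : R) (m : ℕ) : R := p * (1 - p) ^ m + (1 - p) * (-p) ^ m

@[simp]
lemma bernoulliCentralMoment_zero (p : R) : bernoulliCentralMoment p 0 = 1 := by
  simp [bernoulliCentralMoment]

@[simp]
lemma bernoulliCentralMoment_one (p : R) : bernoulliCentralMoment p 1 = 0 := by
  simp only [bernoulliCentralMoment]; ring

lemma bernoulliCentralMoment_succ (p : R) (m : ℕ) :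
    bernoulliCentralMoment p (m + 1) = p * (1 - p) * ((1 - p) ^ m - (-p) ^ m) := by
  simp only [bernoulliCentralMoment, pow_succ]; ring

lemma prod_bernoulliCentralMoment_fiberCard_eq_zero {p : R} {f : α → ι}
    (hf : ∃ i, fiberCard f i = 1) : ∏ i, bernoulliCentralMoment p (fiberCard f i) = 0 := by
  obtain ⟨i, hi⟩ := hf
  exact prod_eq_zero (mem_univ i) (by rw [hi, bernoulliCentralMoment_one])

lemma sum_powerset_mul_prod_ite_sub_eq_prod_bernoulliCentralMoment (p : R) (f : α → ι) :
    ∑ A ∈ (univ : Finset ι).powerset, p ^ #A * (1 - p) ^ (Fintype.card ι - #A) *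
        ∏ t, ((if f t ∈ A then 1 else 0) - p) =
      ∏ i, bernoulliCentralMoment p (fiberCard f i) := by
  have hfactor : ∀ A : Finset ι, p ^ #A * (1 - p) ^ (Fintype.card ι - #A) *
        ∏ t, ((if f t ∈ A then 1 else 0) - p) =
      (∏ i ∈ A, p * (1 - p) ^ fiberCard f i) *
        ∏ i ∈ univ \ A, (1 - p) * (-p) ^ fiberCard f i := by
    intro A
    have hA : ∏ i ∈ A, ((if i ∈ A then 1 else 0) - p) ^ fiberCard f i =
        ∏ i ∈ A, (1 - p) ^ fiberCard f i := prod_congr rfl fun i hi ↦ by simp [hi]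
    have hAc : ∏ i ∈ univ \ A, ((if i ∈ A then 1 else 0) - p) ^ fiberCard f i =
        ∏ i ∈ univ \ A, (-p) ^ fiberCard f i :=
      prod_congr rfl fun i hi ↦ by simp [(mem_sdiff.mp hi).2]
    rw [prod_comp_eq_prod_pow_fiberCard (fun i ↦ (if i ∈ A then 1 else 0) - p),
      ← prod_sdiff (subset_univ A), hA, hAc, prod_mul_distrib, prod_mul_distrib, prod_const,
      prod_const, card_univ_sdiff]
    ring
  simp_rw [hfactor, ← prod_add]
  rfl

theorem sum_range_choose_mul_pow_mul_sub_pow_eq (p : R) (n d : ℕ) :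
    ∑ j ∈ range (n + 1), (n.choose j : R) * p ^ j * (1 - p) ^ (n - j) * ((j : R) - n * p) ^ d =
      ∑ f : Fin d → Fin n, ∏ i, bernoulliCentralMoment p (fiberCard f i) := by
  have hcentered : ∀ A : Finset (Fin n),
      (#A : R) - n * p = ∑ i, ((if i ∈ A then 1 else 0) - p) := by
    intro A
    simp [sum_sub_distrib]
  calc ∑ j ∈ range (n + 1), (n.choose j : R) * p ^ j * (1 - p) ^ (n - j) * ((j : R) - n * p) ^ d
      = ∑ A ∈ (univ : Finset (Fin n)).powerset,
          p ^ #A * (1 - p) ^ (n - #A) * ((#A : R) - n * p) ^ d := by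
        rw [sum_powerset_apply_card (fun j ↦ p ^ j * (1 - p) ^ (n - j) * ((j : R) - n * p) ^ d),
          card_univ, Fintype.card_fin]
        simp only [nsmul_eq_mul, mul_assoc]
    _ = ∑ A ∈ (univ : Finset (Fin n)).powerset, ∑ f : Fin d → Fin n,
          p ^ #A * (1 - p) ^ (n - #A) * ∏ t, ((if f t ∈ A then 1 else 0) - p) := by
        simp_rw [hcentered, Fintype.sum_pow, mul_sum]
    _ = ∑ f : Fin d → Fin n, ∏ i, bernoulliCentralMoment p (fiberCard f i) := by
        rw [sum_comm]
        refine sum_congr rfl fun f _ ↦ ?_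
        simpa using sum_powerset_mul_prod_ite_sub_eq_prod_bernoulliCentralMoment p f

end CommRing

section LinearOrder

variable {R : Type*} [CommRing R] [LinearOrder R] [IsStrictOrderedRing R] {p : R}

lemma bernoulliCentralMoment_nonneg (hp : 0 ≤ p) (hpq : p ≤ 1 - p) (m : ℕ) :
    0 ≤ bernoulliCentralMoment p m := by
  cases m with
  | zero => simp
  | succ m =>
    rw [bernoulliCentralMoment_succ]
    have hpow : (-p) ^ m ≤ (1 - p) ^ m := calc
      (-p) ^ m ≤ |(-p) ^ m| := le_abs_self _
      _ = p ^ m := by rw [abs_pow, abs_neg, abs_of_nonneg hp]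
      _ ≤ (1 - p) ^ m := pow_le_pow_left₀ hp hpq m
    exact mul_nonneg (mul_nonneg hp (by linarith)) (sub_nonneg.mpr hpow)

lemma bernoulliCentralMoment_le (hp : 0 ≤ p) (hp1 : p ≤ 1) {m : ℕ} (hm : 2 ≤ m) :
    bernoulliCentralMoment p m ≤ p * (1 - p) := by
  obtain ⟨k, rfl⟩ : ∃ k, m = k + 1 + 1 := ⟨m - 2, by omega⟩
  rw [bernoulliCentralMoment_succ]
  have hq : (1 - p) ^ (k + 1) ≤ 1 - p :=
    pow_le_of_le_one (by linarith) (by linarith) k.succ_ne_zero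
  have hp' : -(-p) ^ (k + 1) ≤ p := calc
    -(-p) ^ (k + 1) ≤ |(-p) ^ (k + 1)| := neg_le_abs _
    _ = p ^ (k + 1) := by rw [abs_pow, abs_neg, abs_of_nonneg hp]
    _ ≤ p := pow_le_of_le_one hp hp1 k.succ_ne_zero
  exact mul_le_of_le_one_right (mul_nonneg hp (by linarith)) (by linarith)

variable {α ι : Type*} [Fintype α] [Fintype ι] [DecidableEq ι]

lemma prod_bernoulliCentralMoment_fiberCard_le (hp : 0 ≤ p) (hpq : p ≤ 1 - p) {f : α → ι}
    (hf : ∀ i, fiberCard f i ≠ 1) :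
    ∏ i, bernoulliCentralMoment p (fiberCard f i) ≤ (p * (1 - p)) ^ #(univ.image f) := by
  rw [← prod_subset (subset_univ (univ.image f)) fun i _ hi ↦ by
    rw [fiberCard_eq_zero_iff.mpr hi, bernoulliCentralMoment_zero], ← prod_const]
  refine prod_le_prod (fun i _ ↦ bernoulliCentralMoment_nonneg hp hpq _) fun i hi ↦ ?_
  have := fiberCard_eq_zero_iff.not_left.mpr hi
  exact bernoulliCentralMoment_le hp (by linarith) (by have := hf i; omega)

lemma prod_bernoulliCentralMoment_fiberCard_le_ite [Nonempty α] (hp : 0 ≤ p)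
    (hpq : p ≤ 1 - p) (f : α → ι) :
    ∏ i, bernoulliCentralMoment p (fiberCard f i) ≤
      if #(univ.image f) ∈ Icc 1 (Fintype.card α / 2) then (p * (1 - p)) ^ #(univ.image f)
      else 0 := by
  by_cases hf : ∃ i, fiberCard f i = 1
  · rw [prod_bernoulliCentralMoment_fiberCard_eq_zero hf]
    split_ifs
    exacts [pow_nonneg (mul_nonneg hp (by linarith)) _, le_rfl]
  · push Not at hf
    have hcard : #(univ.image f) ∈ Icc 1 (Fintype.card α / 2) := by
      have := two_mul_card_image_le hf
      have := card_pos.mpr (univ_nonempty.image f)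
      rw [mem_Icc, Nat.le_div_iff_mul_le two_pos]
      omega
    rw [if_pos hcard]
    exact prod_bernoulliCentralMoment_fiberCard_le hp hpq hf

end LinearOrder

/-- upper bound on the d-th central binomial moment for p ≤ 1/2. -/
theorem central_moment_upper_bound (n : ℕ) (p : ℝ) (hp0 : 0 ≤ p)
    (hp : p ≤ 1 / 2) (q : ℝ) (hq : q = 1 - p) (d : ℕ) (hd : 2 ≤ d) :
    ∑ j ∈ Finset.range (n + 1),
        (n.choose j : ℝ) * p ^ j * q ^ (n - j) * ((j : ℝ) - n * p) ^ d ≤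
    ∑ k ∈ Finset.Icc 1 (d / 2),
      (n.choose k : ℝ) * (p * q) ^ k * (k : ℝ) ^ d := by
  subst hq
  have : Nonempty (Fin d) := ⟨⟨0, by omega⟩⟩
  have hpq : p ≤ 1 - p := by linarith
  set G : ℕ → ℝ := fun k ↦ if k ∈ Icc 1 (d / 2) then (p * (1 - p)) ^ k else 0
  have hG : ∀ k, 0 ≤ G k := fun k ↦ by
    simp only [G]; split_ifs
    exacts [pow_nonneg (mul_nonneg hp0 (by linarith)) _, le_rfl]
  rw [sum_range_choose_mul_pow_mul_sub_pow_eq]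
  calc ∑ f : Fin d → Fin n, ∏ i, bernoulliCentralMoment p (fiberCard f i)
      ≤ ∑ f : Fin d → Fin n, G #(univ.image f) := sum_le_sum fun f _ ↦ by
        simpa only [Fintype.card_fin] using prod_bernoulliCentralMoment_fiberCard_le_ite hp0 hpq f
    _ ≤ ∑ k ∈ range (n + 1), (n.choose k * k ^ d : ℝ) * G k := by
        simpa only [Fintype.card_fin] using
          sum_apply_card_image_le (α := Fin d) (ι := Fin n) G hG
    _ = ∑ k ∈ range (n + 1) ∩ Icc 1 (d / 2), (n.choose k : ℝ) * (p * (1 - p)) ^ k * k ^ d := by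
        rw [← sum_ite_mem]
        refine sum_congr rfl fun k _ ↦ ?_
        simp only [G]; split_ifs <;> ring
    _ = _ := sum_subset inter_subset_right fun k _ hk ↦ by
        rw [Nat.choose_eq_zero_of_lt (by simp_all), Nat.cast_zero, zero_mul, zero_mul]
end

section
/- Let 0 ≤ p ≤ 1 and q = 1−p, let k ≥ 1 and let d_1,…,d_k be even natural numbers, each at least 2, with d_1+⋯+d_k = d. Then ∏_{i=1}^{k} (q^{d_i−1} − (−p)^{d_i−1}) = ∏_{i=1}^{k} (q^{d_i−1} + p^{d_i−1}) ≥ 2^{2k−d}. -/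
/-!
Each exponent `n = dᵢ - 1` is odd, so `(-p) ^ n = -p ^ n`. Since `p + q = 1`, convexity of
`t ↦ tⁿ` gives `qⁿ + pⁿ ≥ 2 ((p + q) / 2)ⁿ = 2 ^ (1 - n) = 2 ^ (2 - dᵢ)`, and multiplying over
`i` gives `2 ^ (2k - d)`.
-/

open Finset

theorem zpow_sum_of_ne_zero {ι G₀ : Type*} [CommGroupWithZero G₀] {x : G₀} (hx : x ≠ 0)
    (s : Finset ι) (f : ι → ℤ) : x ^ (∑ i ∈ s, f i) = ∏ i ∈ s, x ^ f i := by
  classical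
  induction s using Finset.induction_on with
  | empty => simp
  | insert j s hj ih => rw [sum_insert hj, prod_insert hj, zpow_add₀ hx, ih]

theorem two_zpow_one_sub_le_pow_add_pow {a b : ℝ} (ha : 0 ≤ a) (hb : 0 ≤ b) (hab : a + b = 1)
    (n : ℕ) : (2 : ℝ) ^ (1 - (n : ℤ)) ≤ a ^ n + b ^ n := by
  cases n with
  | zero => norm_num
  | succ n =>
    have h := add_pow_le ha hb (n + 1)
    rw [hab, one_pow, Nat.add_sub_cancel] at h
    rw [Nat.cast_succ, sub_add_cancel_right, zpow_neg, zpow_natCast]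
    exact (inv_le_iff_one_le_mul₀' (by positivity)).mpr h

theorem prod_factor_lower_bound_general (p : ℝ) (hp0 : 0 ≤ p) (hp1 : p ≤ 1) (q : ℝ)
    (hq : q = 1 - p) (k : ℕ) (d : ℕ) (a : Fin k → ℕ)
    (heven : ∀ i, Even (a i)) (h2 : ∀ i, 2 ≤ a i) (hsum : ∑ i, a i = d) :
    (∏ i, (q ^ (a i - 1) - (-p) ^ (a i - 1)) =
      ∏ i, (q ^ (a i - 1) + p ^ (a i - 1))) ∧
    (2 : ℝ) ^ (2 * (k : ℤ) - (d : ℤ)) ≤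
      ∏ i, (q ^ (a i - 1) + p ^ (a i - 1)) := by
  have hodd (i : Fin k) : Odd (a i - 1) :=
    Nat.Even.sub_odd (one_le_two.trans (h2 i)) (heven i) odd_one
  refine ⟨prod_congr rfl fun i _ => by rw [(hodd i).neg_pow, sub_neg_eq_add], ?_⟩
  have hexp : 2 * (k : ℤ) - d = ∑ i, (1 - ((a i - 1 : ℕ) : ℤ)) := by
    simp only [Nat.cast_sub (one_le_two.trans (h2 _)), ← hsum]
    push_cast
    simp only [sum_sub_distrib, sum_const, card_univ, Fintype.card_fin, Int.nsmul_eq_mul, mul_one]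
    ring
  rw [hexp, zpow_sum_of_ne_zero two_ne_zero]
  exact prod_le_prod (fun _ _ => by positivity) fun i _ =>
    two_zpow_one_sub_le_pow_add_pow (by linarith) hp0 (by linarith) _

/-- for even parts d_i ≥ 2 summing to d, the product of the
factors q^{d_i−1} − (−p)^{d_i−1} equals ∏ (q^{d_i−1} + p^{d_i−1}) and is at
least 2^{2k−d}. -/
theorem prod_factor_lower_bound (p : ℝ) (hp0 : 0 ≤ p) (hp1 : p ≤ 1) (q : ℝ)
    (hq : q = 1 - p) (k : ℕ) (hk : 1 ≤ k) (d : ℕ) (a : Fin k → ℕ)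
    (heven : ∀ i, Even (a i)) (h2 : ∀ i, 2 ≤ a i) (hsum : ∑ i, a i = d) :
    (∏ i, (q ^ (a i - 1) - (-p) ^ (a i - 1)) =
      ∏ i, (q ^ (a i - 1) + p ^ (a i - 1))) ∧
    (2 : ℝ) ^ (2 * (k : ℤ) - (d : ℤ)) ≤
      ∏ i, (q ^ (a i - 1) + p ^ (a i - 1)) :=
  prod_factor_lower_bound_general p hp0 hp1 q hq k d a heven h2 hsum
end

section
/- There exists a universal constant c > 0 such that for every natural number n, every real p with 0 ≤ p ≤ 1 and q = 1−p, and every even natural number d ≥ 2, the d-th central binomial moment satisfies ∑_{j=0}^{n} C(n,j) p^j q^{n−j} (j−np)^d ≥ ∑_{k=1}^{⌊d/2⌋} C(n,k) (pq)^k · (c·k)^d. -/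
/-!
Write `S - n p` as a sum of `n` independent centred Bernoulli variables `X` and expand the
`d`-th power. Since `E[X] = 0` and `E[X^i] = p q w(i)` with `w(i) = q^(i-1) - (-p)^(i-1)` for
`i ≥ 1`, the moment becomes `∑_k C(n,k) (p q)^k W(d,k)`, where `W(d,k)` is the sum over
compositions of `d` into `k` parts of the multinomial coefficient times `∏ w(iⱼ)`.

For even `i ≥ 2` we have `w(i) = q^(i-1) + p^(i-1) ≥ 2^(-i)`, while for odd `i` the weight is
`(1 - 2p)` times a nonnegative number. A composition of an even `d` has an even number of odd
parts, so every term of `W(d,k)` is nonnegative and `W(d,k)` is at least the term of a single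
composition of `d` into `k` even parts of size at most `m ≤ 2d/k`, which is
`≥ d! / (2m)^d ≥ (d / 6m)^d ≥ (k/12)^d`.
-/

open Finset
open scoped Nat

namespace BinomialMoment

noncomputable def centralMoment (n : ℕ) (p : ℝ) (d : ℕ) : ℝ :=
  ∑ j ∈ range (n + 1), (n.choose j : ℝ) * p ^ j * (1 - p) ^ (n - j) * ((j : ℝ) - n * p) ^ d

/-- For `i ≥ 1`, `p * (1 - p) * reducedMoment p i` is the `i`-th central moment
`(1 - p) * (-p) ^ i + p * (1 - p) ^ i` of a Bernoulli(`p`) variable; at `i = 0` it is `0`. -/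
noncomputable def reducedMoment (p : ℝ) : ℕ → ℝ
  | 0 => 0
  | i + 1 => (1 - p) ^ i - (-p) ^ i

/-- `compositionSum p d k = ∑ d! / (i₁! ⋯ iₖ!) * ∏ reducedMoment p iⱼ` over the compositions
`d = i₁ + ⋯ + iₖ`. -/
noncomputable def compositionSum (p : ℝ) : ℕ → ℕ → ℝ
  | d, 0 => if d = 0 then 1 else 0
  | d, k + 1 => ∑ i ∈ range (d + 1),
      (d.choose i : ℝ) * reducedMoment p i * compositionSum p (d - i) k

theorem bernoulli_expectation_add_pow (p y : ℝ) (d : ℕ) :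
    (1 - p) * (y - p) ^ d + p * (y + (1 - p)) ^ d =
      y ^ d + p * (1 - p) *
        ∑ i ∈ range (d + 1), (d.choose i : ℝ) * reducedMoment p i * y ^ (d - i) := by
  rw [show y - p = -p + y by ring, show y + (1 - p) = (1 - p) + y by ring, add_pow, add_pow,
    mul_sum, mul_sum, ← sum_add_distrib, sum_range_succ', sum_range_succ' _ d]
  have hsum : ∀ i ∈ range d,
      (1 - p) * ((-p) ^ (i + 1) * y ^ (d - (i + 1)) * d.choose (i + 1)) +
        p * ((1 - p) ^ (i + 1) * y ^ (d - (i + 1)) * d.choose (i + 1)) =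
      p * (1 - p) * (d.choose (i + 1) * reducedMoment p (i + 1) * y ^ (d - (i + 1))) :=
    fun i _ ↦ by rw [reducedMoment]; ring
  rw [sum_congr rfl hsum, ← mul_sum, reducedMoment.eq_1, mul_zero, zero_mul, add_zero,
    add_comm]
  congr 1
  simp only [pow_zero, Nat.sub_zero, Nat.choose_zero_right, Nat.cast_one, mul_one, one_mul]
  ring

theorem centralMoment_succ (n : ℕ) (p : ℝ) (d : ℕ) :
    centralMoment (n + 1) p d = centralMoment n p d +
      p * (1 - p) * ∑ i ∈ range (d + 1),
        (d.choose i : ℝ) * reducedMoment p i * centralMoment n p (d - i) := by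
  set f : ℕ → ℕ → ℝ := fun j l ↦ p ^ j * (1 - p) ^ l * ((j : ℝ) - (j + l : ℕ) * p) ^ d
  have hf : centralMoment (n + 1) p d =
      ∑ j ∈ range (n + 2), ((n + 1).choose j : ℝ) * f j (n + 1 - j) := by
    refine sum_congr rfl fun j hj ↦ ?_
    simp only [f]
    rw [Nat.add_sub_cancel' (by simp at hj; omega)]
    ring
  have hpair : ∀ j ∈ range (n + 1),
      (n.choose j : ℝ) * f j (n + 1 - j) + (n.choose j : ℝ) * f (j + 1) (n - j) =
        (n.choose j : ℝ) * p ^ j * (1 - p) ^ (n - j) *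
          ((1 - p) * ((j - n * p) - p) ^ d + p * ((j - n * p) + (1 - p)) ^ d) := by
    intro j hj
    have hjn : j ≤ n := by simp at hj; omega
    simp only [f, show n + 1 - j = n - j + 1 by omega, show j + (n - j + 1) = n + 1 by omega,
      show j + 1 + (n - j) = n + 1 by omega]
    push_cast
    ring
  rw [hf, sum_choose_succ_mul, ← sum_add_distrib, sum_congr rfl hpair]
  simp only [bernoulli_expectation_add_pow, centralMoment, mul_add, mul_sum, sum_add_distrib]
  rw [sum_comm]
  congr 1
  exact sum_congr rfl fun i _ ↦ sum_congr rfl fun j _ ↦ by ring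

theorem centralMoment_eq_sum_compositionSum (n : ℕ) (p : ℝ) (d : ℕ) :
    centralMoment n p d =
      ∑ k ∈ range (n + 1), (n.choose k : ℝ) * (p * (1 - p)) ^ k * compositionSum p d k := by
  induction n generalizing d with
  | zero => simp [centralMoment, compositionSum, zero_pow_eq]
  | succ n ih =>
    have pascal := sum_choose_succ_mul (fun k _ ↦ (p * (1 - p)) ^ k * compositionSum p d k) n
    simp only [← mul_assoc] at pascal
    rw [centralMoment_succ, pascal, ih]
    simp only [ih, compositionSum, mul_sum]
    rw [sum_comm]
    exact congrArg _ (sum_congr rfl fun k _ ↦ sum_congr rfl fun i _ ↦ by ring)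

section

variable {p : ℝ}

theorem one_le_two_pow_mul_reducedMoment (hp0 : 0 ≤ p) (hp1 : p ≤ 1) {i : ℕ} (hi : Even i)
    (hi0 : i ≠ 0) : 1 ≤ 2 ^ i * reducedMoment p i := by
  obtain ⟨j, rfl⟩ : ∃ j, i = j + 1 := ⟨i - 1, by omega⟩
  have hj : Odd j := by simpa [Nat.even_add_one] using hi
  have hsplit : 2 ^ (j + 1) * reducedMoment p (j + 1) =
      2 * ((2 * (1 - p)) ^ j + (2 * p) ^ j) := by
    rw [reducedMoment, hj.neg_pow, mul_pow, mul_pow]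
    ring
  rw [hsplit]
  rcases le_total p (1 / 2) with h | h
  · nlinarith [one_le_pow₀ (show 1 ≤ 2 * (1 - p) by linarith) (n := j),
      pow_nonneg (show 0 ≤ 2 * p by linarith) j]
  · nlinarith [one_le_pow₀ (show 1 ≤ 2 * p by linarith) (n := j),
      pow_nonneg (show 0 ≤ 2 * (1 - p) by linarith) j]

theorem reducedMoment_nonneg_of_even (hp0 : 0 ≤ p) (hp1 : p ≤ 1) {i : ℕ} (hi : Even i) :
    0 ≤ reducedMoment p i := by
  rcases eq_or_ne i 0 with rfl | hi0
  · exact le_rfl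
  · exact nonneg_of_mul_nonneg_right
      (zero_le_one.trans (one_le_two_pow_mul_reducedMoment hp0 hp1 hi hi0)) (by positivity)

theorem exists_reducedMoment_eq_of_odd (hp0 : 0 ≤ p) (hp1 : p ≤ 1) {i : ℕ} (hi : Odd i) :
    ∃ u, 0 ≤ u ∧ reducedMoment p i = (1 - 2 * p) * u := by
  obtain ⟨j, rfl⟩ : ∃ j, i = j + 1 := ⟨i - 1, by have := hi.pos; omega⟩
  have hj : Even j := by simpa [Nat.odd_add_one] using hi
  refine ⟨∑ a ∈ range j, (1 - p) ^ a * p ^ (j - 1 - a), sum_nonneg fun a _ ↦ ?_, ?_⟩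
  · have : 0 ≤ 1 - p := by linarith
    positivity
  · rw [reducedMoment, hj.neg_pow, ← geom_sum₂_mul]
    ring

/-- Odd parts carry a factor `1 - 2 * p`, and a composition of `d` has `d % 2` odd parts
modulo `2`: this is why the sign of `compositionSum p d k` is that of `(1 - 2 * p) ^ (d % 2)`. -/
theorem compositionSum_summand_nonneg {k : ℕ} (hp0 : 0 ≤ p) (hp1 : p ≤ 1)
    (hk : ∀ d, 0 ≤ (1 - 2 * p) ^ (d % 2) * compositionSum p d k) {d i : ℕ} (hi : i ≤ d) :
    0 ≤ (1 - 2 * p) ^ (d % 2) *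
      ((d.choose i : ℝ) * reducedMoment p i * compositionSum p (d - i) k) := by
  have hC : (0 : ℝ) ≤ d.choose i := Nat.cast_nonneg _
  rcases Nat.even_or_odd i with hie | hio
  · have hpar : (d - i) % 2 = d % 2 := by obtain ⟨t, rfl⟩ := hie; omega
    have := mul_nonneg (mul_nonneg hC (reducedMoment_nonneg_of_even hp0 hp1 hie)) (hk (d - i))
    rw [hpar] at this
    exact this.trans_eq (by ring)
  · obtain ⟨u, hu, hw⟩ := exists_reducedMoment_eq_of_odd hp0 hp1 hio
    have hCu := mul_nonneg hC hu
    rw [hw]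
    rcases Nat.mod_two_eq_zero_or_one d with hd | hd
    · have hpar : (d - i) % 2 = 1 := by obtain ⟨t, rfl⟩ := hio; omega
      have := mul_nonneg hCu (hk (d - i))
      rw [hpar, pow_one] at this
      rw [hd]
      exact this.trans_eq (by ring)
    · have hpar : (d - i) % 2 = 0 := by obtain ⟨t, rfl⟩ := hio; omega
      have := mul_nonneg (mul_nonneg hCu (sq_nonneg (1 - 2 * p))) (hk (d - i))
      rw [hpar, pow_zero, one_mul] at this
      rw [hd]
      exact this.trans_eq (by ring)

theorem one_sub_two_mul_pow_mul_compositionSum_nonneg (hp0 : 0 ≤ p) (hp1 : p ≤ 1) (d k : ℕ) :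
    0 ≤ (1 - 2 * p) ^ (d % 2) * compositionSum p d k := by
  induction k generalizing d with
  | zero =>
    rcases eq_or_ne d 0 with rfl | hd
    · simp [compositionSum]
    · simp [compositionSum, hd]
  | succ k ih =>
    rw [compositionSum, mul_sum]
    exact sum_nonneg fun i hi ↦
      compositionSum_summand_nonneg hp0 hp1 ih (by simpa [Nat.lt_succ_iff] using hi)

theorem compositionSum_nonneg (hp0 : 0 ≤ p) (hp1 : p ≤ 1) {d : ℕ} (hd : Even d) (k : ℕ) :
    0 ≤ compositionSum p d k := by
  simpa [Nat.even_iff.mp hd] using one_sub_two_mul_pow_mul_compositionSum_nonneg hp0 hp1 d k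

theorem summand_le_compositionSum_succ (hp0 : 0 ≤ p) (hp1 : p ≤ 1) {d : ℕ} (hd : Even d)
    {i : ℕ} (hi : i ≤ d) (k : ℕ) :
    (d.choose i : ℝ) * reducedMoment p i * compositionSum p (d - i) k ≤
      compositionSum p d (k + 1) := by
  have hsummand : ∀ j ≤ d,
      0 ≤ (d.choose j : ℝ) * reducedMoment p j * compositionSum p (d - j) k := fun j hj ↦ by
    simpa [Nat.even_iff.mp hd] using compositionSum_summand_nonneg hp0 hp1
      (one_sub_two_mul_pow_mul_compositionSum_nonneg hp0 hp1 · k) hj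
  exact single_le_sum
    (f := fun j ↦ (d.choose j : ℝ) * reducedMoment p j * compositionSum p (d - j) k)
    (fun j hj ↦ hsummand j (by simpa [Nat.lt_succ_iff] using hj))
    (by simpa [Nat.lt_succ_iff] using hi)

/-- Keep one composition of `σ` into `j` even parts of size at most `m`, choosing each part
greedily as large as possible. -/
theorem factorial_le_two_mul_pow_mul_compositionSum (hp0 : 0 ≤ p) (hp1 : p ≤ 1) {m : ℕ}
    (hm : Even m) (hm2 : 2 ≤ m) (j : ℕ) {σ : ℕ} (hσ : Even σ) (hjσ : 2 * j ≤ σ)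
    (hσm : σ ≤ m * j) : (σ ! : ℝ) ≤ (2 * m) ^ σ * compositionSum p σ j := by
  induction j generalizing σ with
  | zero =>
    obtain rfl : σ = 0 := by omega
    simp [compositionSum]
  | succ j ih =>
    set i := min m (σ - 2 * j)
    have hmj : 2 * j ≤ m * j := Nat.mul_le_mul_right j hm2
    have hm1 : m * (j + 1) = m * j + m := by ring
    rw [Nat.even_iff] at hm hσ
    have hie : Even i := Nat.even_iff.mpr (by omega)
    have hrest := ih (σ := σ - i) (Nat.even_iff.mpr (by omega)) (by omega) (by omega)
    have hw := one_le_two_pow_mul_reducedMoment hp0 hp1 hie (by omega)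
    have hfact : (i ! : ℝ) ≤ m ^ i := by
      exact_mod_cast (Nat.factorial_le_pow i).trans (Nat.pow_le_pow_left (by omega) i)
    have hpow : (2 * m : ℝ) ^ σ = (2 * m) ^ i * (2 * m) ^ (σ - i) := by
      rw [← pow_add, Nat.add_sub_cancel' (by omega)]
    calc (σ ! : ℝ) = σ.choose i * i ! * (σ - i)! := by
          exact_mod_cast (Nat.choose_mul_factorial_mul_factorial (by omega)).symm
      _ ≤ σ.choose i * (m ^ i * (2 ^ i * reducedMoment p i)) *
            ((2 * m) ^ (σ - i) * compositionSum p (σ - i) j) := by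
          gcongr
          exact hfact.trans (le_mul_of_one_le_right (by positivity) hw)
      _ = (2 * m) ^ σ * (σ.choose i * reducedMoment p i * compositionSum p (σ - i) j) := by
          rw [hpow, mul_pow]
          ring
      _ ≤ (2 * m) ^ σ * compositionSum p σ (j + 1) := by
          gcongr
          exact summand_le_compositionSum_succ hp0 hp1 (Nat.even_iff.mpr hσ) (by omega) j

end

theorem pow_div_three_le_factorial (n : ℕ) : ((n : ℝ) / 3) ^ n ≤ n ! := by
  have hexp := Real.pow_div_factorial_le_exp (n : ℝ) (Nat.cast_nonneg n) n
  have h3 : Real.exp n ≤ 3 ^ n := by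
    rw [← Real.exp_one_pow]
    exact pow_le_pow_left₀ (Real.exp_pos 1).le Real.exp_one_lt_three.le n
  rw [div_le_iff₀ (by positivity)] at hexp
  rw [div_pow, div_le_iff₀ (by positivity)]
  nlinarith [Nat.cast_nonneg (α := ℝ) n !]

/-- With `d = 2D`, parts of size at most `m = 2 (⌊D / k⌋ + 1)` suffice, and `m k ≤ 2 d`. -/
theorem pow_le_compositionSum {p : ℝ} (hp0 : 0 ≤ p) (hp1 : p ≤ 1) {d k : ℕ} (hd : Even d)
    (hk : 1 ≤ k) (hkd : 2 * k ≤ d) : ((12 : ℝ)⁻¹ * k) ^ d ≤ compositionSum p d k := by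
  obtain ⟨D, rfl⟩ := hd
  have hdiv := Nat.lt_div_mul_add (a := D) hk
  have hdiv' := Nat.div_mul_le_self D k
  generalize D / k = A at hdiv hdiv'
  have hmk : D + D ≤ 2 * (A + 1) * k := by linarith
  have hmk' : ((2 * (A + 1) * k : ℕ) : ℝ) ≤ 2 * (D + D : ℕ) := by
    exact_mod_cast (show 2 * (A + 1) * k ≤ 2 * (D + D) by linarith)
  have key := factorial_le_two_mul_pow_mul_compositionSum hp0 hp1 (even_two_mul (A + 1))
    (by omega) k ⟨D, rfl⟩ hkd hmk
  refine le_of_mul_le_mul_right ?_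
    (by positivity : (0 : ℝ) < (2 * (2 * (A + 1) : ℕ)) ^ (D + D))
  calc ((12 : ℝ)⁻¹ * k) ^ (D + D) * (2 * (2 * (A + 1) : ℕ)) ^ (D + D)
      = (((2 * (A + 1) * k : ℕ) : ℝ) / 6) ^ (D + D) := by
        rw [← mul_pow]
        push_cast
        ring
    _ ≤ (((D + D : ℕ) : ℝ) / 3) ^ (D + D) := pow_le_pow_left₀ (by positivity) (by linarith) _
    _ ≤ ((D + D) ! : ℝ) := pow_div_three_le_factorial _
    _ ≤ _ := key.trans_eq (mul_comm _ _)

end BinomialMoment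

open BinomialMoment

/-- there is a universal constant c > 0 such that, for even d ≥ 2,
the d-th central binomial moment is bounded below by
∑_{k=1}^{⌊d/2⌋} C(n,k) (pq)^k (c k)^d. -/
theorem central_moment_lower_bound :
    ∃ c : ℝ, 0 < c ∧ ∀ (n : ℕ) (p : ℝ), 0 ≤ p → p ≤ 1 →
      ∀ d : ℕ, Even d → 2 ≤ d →
      ∑ k ∈ Finset.Icc 1 (d / 2),
          (n.choose k : ℝ) * (p * (1 - p)) ^ k * (c * k) ^ d ≤
      ∑ j ∈ Finset.range (n + 1),
          (n.choose j : ℝ) * p ^ j * (1 - p) ^ (n - j) * ((j : ℝ) - n * p) ^ d := by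
  refine ⟨12⁻¹, by norm_num, fun n p hp0 hp1 d hd _ ↦ ?_⟩
  change _ ≤ centralMoment n p d
  rw [centralMoment_eq_sum_compositionSum]
  have hterm : ∀ k, 0 ≤ (n.choose k : ℝ) * (p * (1 - p)) ^ k * compositionSum p d k :=
    fun k ↦ mul_nonneg (by positivity) (compositionSum_nonneg hp0 hp1 hd k)
  calc _ ≤ ∑ k ∈ Icc 1 (d / 2),
          (n.choose k : ℝ) * (p * (1 - p)) ^ k * compositionSum p d k :=
        sum_le_sum fun k hk ↦ by
          rw [mem_Icc] at hk
          gcongr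
          exact pow_le_compositionSum hp0 hp1 hd hk.1 (by omega)
    _ ≤ ∑ k ∈ range (n + 1) ∪ Icc 1 (d / 2),
          (n.choose k : ℝ) * (p * (1 - p)) ^ k * compositionSum p d k :=
        sum_le_sum_of_subset_of_nonneg subset_union_right fun k _ _ ↦ hterm k
    _ = _ := (sum_subset subset_union_left fun k _ hk ↦ by
          rw [Nat.choose_eq_zero_of_lt (by simpa using hk)]; simp).symm
end

section
/- For every natural number n, every real p, real q, and every natural number d ≥ 1, the d-th power moment of a sum of n independent Bernoulli(p) variables expands as ∑_{j=0}^{n} C(n,j) p^j (1−p)^{n−j} j^d = ∑_{k=0}^{d} C(n,k) p^k · ∑_{(d_1,…,d_k), each d_i ≥ 1, d_1+⋯+d_k = d} C(d; d_1,…,d_k), where the inner sum ranges over ordered k-tuples of positive integers summing to d. -/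
/-!
Expanding `j ^ d = (1 + ⋯ + 1) ^ d` by the multinomial theorem and grouping the multi-indices by
their support gives `j ^ d = ∑ k, C(j, k) A(d, k)`, where `A(d, k)` is the sum of the multinomial
coefficients of the compositions of `d` into `k` positive parts. Averaging over `j ~ Binom(n, p)`,
the factorial moments are `E[C(S, k)] = C(n, k) p ^ k`, which is the claim.
-/

open Finset

lemma Nat.multinomial_map {ι κ : Type*} (e : ι ↪ κ) (s : Finset ι) (f : κ → ℕ) :
    Nat.multinomial (s.map e) f = Nat.multinomial s (f ∘ e) := by
  simp [Nat.multinomial]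

namespace Finset

variable {ι κ : Type*} [DecidableEq ι] [DecidableEq κ]

/-- The number of surjections from a `d`-element set onto `s`. -/
def positiveMultinomialSum (s : Finset ι) (d : ℕ) : ℕ :=
  ∑ f ∈ {f ∈ piAntidiag s d | ∀ i ∈ s, f i ≠ 0}, Nat.multinomial s f

lemma positiveMultinomialSum_map (e : ι ↪ κ) (s : Finset ι) (d : ℕ) :
    positiveMultinomialSum (s.map e) d = positiveMultinomialSum s d := by
  unfold positiveMultinomialSum
  refine sum_nbij' (fun f => f ∘ e) (fun g => Function.extend e g 0) ?_ ?_ ?_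
    (fun g _ => Function.extend_comp e.injective g 0) fun f _ => Nat.multinomial_map e s f
  · intro f hf
    simp only [mem_filter, mem_piAntidiag, sum_map, mem_map, Function.comp_apply] at hf ⊢
    refine ⟨⟨hf.1.1, fun i hi => ?_⟩, fun i hi => hf.2 _ ⟨i, hi, rfl⟩⟩
    obtain ⟨a, ha, hai⟩ := hf.1.2 _ hi
    rwa [← e.injective hai]
  · intro g hg
    simp only [mem_filter, mem_piAntidiag, sum_map, mem_map, e.injective.extend_apply] at hg ⊢
    refine ⟨⟨hg.1.1, fun x hx => ?_⟩, ?_⟩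
    · by_cases hxe : ∃ a, e a = x
      · obtain ⟨a, rfl⟩ := hxe
        rw [e.injective.extend_apply] at hx
        exact ⟨a, hg.1.2 a hx, rfl⟩
      · exact absurd (Function.extend_apply' _ _ _ hxe) hx
    · rintro x ⟨a, ha, rfl⟩
      rw [e.injective.extend_apply]
      exact hg.2 a ha
  · intro f hf
    simp only [mem_filter, mem_piAntidiag, mem_map] at hf
    funext x
    by_cases hxe : ∃ a, e a = x
    · obtain ⟨a, rfl⟩ := hxe
      exact e.injective.extend_apply _ _ a
    · rw [Function.extend_apply' _ _ _ hxe]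
      by_contra hx
      obtain ⟨a, -, hax⟩ := hf.1.2 x (Ne.symm hx)
      exact hxe ⟨a, hax⟩

lemma filter_support_piAntidiag_eq {s t : Finset ι} (hts : t ⊆ s) (d : ℕ) :
    {f ∈ piAntidiag s d | {i ∈ s | f i ≠ 0} = t} =
      {f ∈ piAntidiag t d | ∀ i ∈ t, f i ≠ 0} := by
  ext f
  simp only [mem_filter, mem_piAntidiag]
  constructor
  · rintro ⟨⟨hsum, hsupp⟩, rfl⟩
    refine ⟨⟨?_, fun i hi => ?_⟩, fun i hi => (mem_filter.1 hi).2⟩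
    · rw [← hsum]
      exact sum_subset hts fun i hi hit => by simpa [hi] using hit
    · exact mem_filter.2 ⟨hsupp i hi, hi⟩
  · rintro ⟨⟨hsum, hsupp⟩, hpos⟩
    refine ⟨⟨?_, fun i hi => hts (hsupp i hi)⟩, ?_⟩
    · rw [← hsum]
      exact (sum_subset hts fun i _ hit => by_contra fun hi => hit (hsupp i hi)).symm
    · ext i
      exact ⟨fun hi => hsupp i (mem_filter.1 hi).2,
        fun hi => mem_filter.2 ⟨hts hi, hpos i hi⟩⟩

lemma card_pow_eq_sum_powerset_positiveMultinomialSum (s : Finset ι) (d : ℕ) :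
    #s ^ d = ∑ t ∈ s.powerset, positiveMultinomialSum t d := by
  have multinomial_thm := sum_pow_eq_sum_piAntidiag s (fun _ => (1 : ℕ)) d
  simp only [sum_const, smul_eq_mul, mul_one, one_pow, prod_const_one, Nat.cast_id]
    at multinomial_thm
  rw [multinomial_thm, ← sum_fiberwise_of_maps_to (g := fun f => {i ∈ s | f i ≠ 0})
    (t := s.powerset) fun f _ => mem_powerset.2 (filter_subset (fun i => f i ≠ 0) s)]
  refine sum_congr rfl fun t ht => ?_
  have hts := mem_powerset.1 ht
  rw [filter_support_piAntidiag_eq hts, positiveMultinomialSum]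
  refine sum_congr rfl fun f hf => (Nat.multinomial_congr_of_sdiff hts ?_ fun _ _ => rfl).symm
  simp only [mem_filter, mem_piAntidiag] at hf
  intro i hi
  by_contra hfi
  exact (mem_sdiff.1 hi).2 (hf.1.2 i hfi)

lemma positiveMultinomialSum_eq_zero_of_lt {s : Finset ι} {d : ℕ} (h : d < #s) :
    positiveMultinomialSum s d = 0 := by
  refine sum_eq_zero fun f hf => absurd ?_ h.not_ge
  simp only [mem_filter, mem_piAntidiag] at hf
  obtain ⟨⟨hsum, -⟩, hpos⟩ := hf
  simpa [hsum] using card_nsmul_le_sum s f 1 fun i hi => Nat.one_le_iff_ne_zero.2 (hpos i hi)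

lemma positiveMultinomialSum_eq_univ_fin {α : Type*} [DecidableEq α] [LinearOrder α]
    (s : Finset α) (d : ℕ) :
    positiveMultinomialSum s d = positiveMultinomialSum (univ : Finset (Fin #s)) d := by
  rw [← positiveMultinomialSum_map (s.orderEmbOfFin rfl).toEmbedding, map_orderEmbOfFin_univ]

lemma positiveMultinomialSum_univ_fin (k d : ℕ) :
    positiveMultinomialSum (univ : Finset (Fin k)) d =
      ∑ f ∈ (Nat.antidiagonalTuple k d).filter (fun f => ∀ i, 1 ≤ f i),
        Nat.multinomial univ f := by
  simp [positiveMultinomialSum, piAntidiag_univ_fin_eq_antidiagonalTuple, Nat.one_le_iff_ne_zero]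

end Finset

lemma Nat.pow_eq_sum_choose_mul_positiveMultinomialSum (j d : ℕ) :
    j ^ d =
      ∑ k ∈ range (d + 1), j.choose k * positiveMultinomialSum (univ : Finset (Fin k)) d := by
  have choose_mul_eq_zero {k} (hk : k ∉ range (d + 1) ∩ range (j + 1)) :
      j.choose k * positiveMultinomialSum (univ : Finset (Fin k)) d = 0 := by
    rw [mem_inter, mem_range, mem_range, not_and_or, not_lt, not_lt] at hk
    rcases hk with hdk | hjk
    · rw [positiveMultinomialSum_eq_zero_of_lt (by simpa using hdk), mul_zero]
    · rw [Nat.choose_eq_zero_of_lt hjk, zero_mul]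
  calc j ^ d = #(univ : Finset (Fin j)) ^ d := by rw [Finset.card_fin]
    _ = ∑ t ∈ (univ : Finset (Fin j)).powerset, positiveMultinomialSum t d :=
      card_pow_eq_sum_powerset_positiveMultinomialSum _ d
    _ = ∑ t ∈ (univ : Finset (Fin j)).powerset,
          positiveMultinomialSum (univ : Finset (Fin #t)) d :=
      sum_congr rfl fun t _ => positiveMultinomialSum_eq_univ_fin t d
    _ = ∑ k ∈ range (j + 1), j.choose k * positiveMultinomialSum (univ : Finset (Fin k)) d := by
      rw [sum_powerset_apply_card fun k => positiveMultinomialSum (univ : Finset (Fin k)) d,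
        Finset.card_fin]
      rfl
    _ = _ := by
      rw [← sum_subset inter_subset_right fun k _ hk => choose_mul_eq_zero hk,
        sum_subset inter_subset_left fun k _ hk => choose_mul_eq_zero hk]

theorem Finset.sum_choose_mul_choose_mul_pow_mul_pow {R : Type*} [CommSemiring R]
    (n k : ℕ) (x y : R) :
    ∑ j ∈ range (n + 1), (n.choose j * j.choose k : R) * (x ^ j * y ^ (n - j)) =
      n.choose k * x ^ k * (x + y) ^ (n - k) := by
  rcases lt_or_ge n k with hnk | hkn
  · rw [Nat.choose_eq_zero_of_lt hnk, Nat.cast_zero, zero_mul, zero_mul]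
    refine sum_eq_zero fun j hj => ?_
    rw [Nat.choose_eq_zero_of_lt (n := j) (by rw [mem_range] at hj; omega), Nat.cast_zero, mul_zero,
      zero_mul]
  obtain ⟨m, rfl⟩ := Nat.exists_eq_add_of_le hkn
  rw [Nat.add_assoc, sum_range_add, Nat.add_sub_cancel_left, add_pow, mul_sum]
  rw [sum_eq_zero fun j hj => by rw [Nat.choose_eq_zero_of_lt (mem_range.1 hj)]; simp, zero_add]
  refine sum_congr rfl fun i _ => ?_
  have hchoose :
      ((k + m).choose (k + i) * (k + i).choose k : R) = (k + m).choose k * m.choose i := by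
    rw_mod_cast [Nat.choose_mul (Nat.le_add_right k i)]
    simp
  rw [hchoose, show k + m - (k + i) = m - i by omega, pow_add]
  ring

theorem binom_raw_moment_multinomial_general (n : ℕ) (p : ℝ) (d : ℕ) :
    ∑ j ∈ Finset.range (n + 1),
        (n.choose j : ℝ) * p ^ j * (1 - p) ^ (n - j) * (j : ℝ) ^ d =
    ∑ k ∈ Finset.range (d + 1),
      (n.choose k : ℝ) * p ^ k *
        ∑ f ∈ (Finset.Nat.antidiagonalTuple k d).filter (fun f => ∀ i, 1 ≤ f i),
          (Nat.multinomial Finset.univ f : ℝ) := by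
  calc _ = ∑ j ∈ range (n + 1), ∑ k ∈ range (d + 1),
        (n.choose j * j.choose k : ℝ) * (p ^ j * (1 - p) ^ (n - j)) *
          positiveMultinomialSum (univ : Finset (Fin k)) d := by
        refine sum_congr rfl fun j _ => ?_
        rw [← Nat.cast_pow, Nat.pow_eq_sum_choose_mul_positiveMultinomialSum, Nat.cast_sum,
          mul_sum]
        refine sum_congr rfl fun k _ => ?_
        push_cast
        ring
    _ = ∑ k ∈ range (d + 1),
        (∑ j ∈ range (n + 1), (n.choose j * j.choose k : ℝ) * (p ^ j * (1 - p) ^ (n - j))) *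
          positiveMultinomialSum (univ : Finset (Fin k)) d := by
        simp only [sum_mul]
        exact sum_comm
    _ = _ := by
        refine sum_congr rfl fun k _ => ?_
        rw [sum_choose_mul_choose_mul_pow_mul_pow, add_sub_cancel, one_pow, mul_one,
          positiveMultinomialSum_univ_fin, Nat.cast_sum]

/-- the d-th raw binomial moment expands as a sum over k and over
ordered k-tuples of positive parts summing to d of multinomial coefficients. -/
theorem binom_raw_moment_multinomial (n : ℕ) (p q : ℝ) (d : ℕ) (hd : 1 ≤ d) :
    ∑ j ∈ Finset.range (n + 1),
        (n.choose j : ℝ) * p ^ j * (1 - p) ^ (n - j) * (j : ℝ) ^ d =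
    ∑ k ∈ Finset.range (d + 1),
      (n.choose k : ℝ) * p ^ k *
        ∑ f ∈ (Finset.Nat.antidiagonalTuple k d).filter (fun f => ∀ i, 1 ≤ f i),
          (Nat.multinomial Finset.univ f : ℝ) :=
  binom_raw_moment_multinomial_general n p d
end
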